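/- Let ω be a dilation invariant extended limit (extended to bounded complex sequences by ω(x+iy) = ω(x) + i·ω(y)), let α > 1, let A ∈ B(H), and let V be a positive compact operator with V ∈ M_{1,∞}. Let (e_k)_{k≥0} be an orthonormal basis of H consisting of eigenvectors of V with V e_k = μ(k,V)·e_k. Define, for n ≥ 0, x_n = (log(n+2))^{-1} · ∑_{k=0}^∞ μ(k,V)·exp(−((n+2)·μ(k,V))^{−α})·⟪A e_k, e_k⟫ and y_n = (log(n+2))^{-1} · ∑_{k=0}^∞ max(μ(k,V) − 1/(n+2), 0)·⟪A e_k, e_k⟫, with terms where μ(k,V) = 0 interpreted as 0. Then both sequences (x_n) and (y_n) are bounded and ω((x_n)) = ω((y_n)). -/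

import Mathlib

open scoped InnerProductSpace

noncomputable section

variable {H : Type} [NormedAddCommGroup H] [InnerProductSpace ℂ H] [CompleteSpace H]

/-- The `k`-th singular value (approximation number) of a bounded operator:
`μ(k,T) = inf {‖T - F‖ : rank F ≤ k}`. -/
def mu (T : H →L[ℂ] H) (k : ℕ) : ℝ :=
  sInf {c : ℝ | ∃ F : H →L[ℂ] H, LinearMap.rank (F : H →ₗ[ℂ] H) ≤ (k : Cardinal) ∧ ‖T - F‖ = c}

/-- Membership in the Macaev–Dixmier ideal `M_{1,∞}`. -/
def MemM1inf (T : H →L[ℂ] H) : Prop :=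
  IsCompactOperator ⇑T ∧ ∃ M : ℝ, ∀ n : ℕ,
    ∑ k ∈ Finset.range (n + 1), mu T k ≤ M * Real.log (2 + (n : ℝ))

/-- A bounded real sequence. -/
def BddSeq (x : ℕ → ℝ) : Prop := ∃ M : ℝ, ∀ n, |x n| ≤ M

/-- A dilation invariant extended limit. -/
structure ExtLimit (ω : (ℕ → ℝ) → ℝ) : Prop where
  map_add : ∀ x y : ℕ → ℝ, BddSeq x → BddSeq y → ω (x + y) = ω x + ω y
  map_smul : ∀ (c : ℝ) (x : ℕ → ℝ), BddSeq x → ω (c • x) = c * ω x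
  pos : ∀ x : ℕ → ℝ, BddSeq x → (∀ n, 0 ≤ x n) → 0 ≤ ω x
  extends_limit : ∀ (x : ℕ → ℝ) (l : ℝ), Filter.Tendsto x Filter.atTop (nhds l) → ω x = l
  dilation_invariant : ∀ x : ℕ → ℝ, BddSeq x → ∀ m : ℕ, 2 ≤ m → ω (fun j => x (j / m)) = ω x

/-- Extension of an extended limit to bounded complex sequences, `ω(x+iy) = ω(x) + i ω(y)`. -/
def extC (ω : (ℕ → ℝ) → ℝ) (x : ℕ → ℂ) : ℂ :=
  ((ω fun n => (x n).re : ℝ) : ℂ) + Complex.I * ((ω fun n => (x n).im : ℝ) : ℂ)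

/-- The sequence `x_n = (log(n+2))⁻¹ ∑_k μ(k,V) exp(−((n+2) μ(k,V))^{−α}) ⟪A e_k, e_k⟫`
(the eigenbasis form of `(log(n+2))⁻¹ Tr(A V e^{−((n+2)V)^{−α}})`). -/
def heatSeq (A V : H →L[ℂ] H) (e : HilbertBasis ℕ ℂ H) (α : ℝ) (n : ℕ) : ℂ :=
  (((Real.log ((n : ℝ) + 2))⁻¹ : ℝ) : ℂ) *
    ∑' k : ℕ, if mu V k = 0 then (0 : ℂ) else
      ((mu V k * Real.exp (-((((n : ℝ) + 2) * mu V k) ^ (-α))) : ℝ) : ℂ) * ⟪A (e k), e k⟫_ℂ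

/-- The sequence `y_n = (log(n+2))⁻¹ ∑_k (μ(k,V) − 1/(n+2))₊ ⟪A e_k, e_k⟫`
(the eigenbasis form of `(log(n+2))⁻¹ Tr(A (V − 1/(n+2))₊)`). -/
def cutSeq (A V : H →L[ℂ] H) (e : HilbertBasis ℕ ℂ H) (n : ℕ) : ℂ :=
  (((Real.log ((n : ℝ) + 2))⁻¹ : ℝ) : ℂ) *
    ∑' k : ℕ, ((max (mu V k - ((n : ℝ) + 2)⁻¹) 0 : ℝ) : ℂ) * ⟪A (e k), e k⟫_ℂ


/-!
Write `S k = μ(k, V)`, `a k = ⟪A e_k, e_k⟫`, and let `X_n k` and `Y_n k` be the heat and cut-off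
weights of `S k` at scale `t = n + 2`. Both lie between `0` and `min (S k) (t S_k²)`. Since the
partial sums of `S` grow like `log`, `S k = O(log k / k)` and `∑ √(k + 1) S_k² < ∞`; splitting
at `k = t²` then gives `∑ₖ X_n k, ∑ₖ Y_n k = O(log t)`, which bounds both sequences.

For the equality, `0 ≤ X_n - Y_n ≤ min ((t S_k)², 1) / t`, so that
`‖x_n - y_n‖ ≤ ‖A‖ φ(t) / (t log t)` with `φ(t) = ∑ₖ min ((t S_k)², 1)`. As `φ` is nondecreasing,
`φ(m) / m ≤ 4 (Φ(2m) - Φ(m))` for `Φ(m) = ∑_{j<m} φ(j+1) / (j+1)²`. Interchanging the sums shows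
`Φ(m) = O(log m)`, and `Φ` has bounded increments, so `Φ(2m) / log m` and `Φ(m) / log m` differ,
up to `o(1)`, by the dilation `σ₂`; a dilation invariant `ω` therefore gives them the same value,
and the difference of the two sequences is killed by `ω`.
-/

open Real Filter Topology Finset

namespace BddSeq

variable {x y : ℕ → ℝ}

theorem neg (hx : BddSeq x) : BddSeq (-x) := by
  obtain ⟨M, hM⟩ := hx
  exact ⟨M, fun n => by simpa using hM n⟩

theorem add (hx : BddSeq x) (hy : BddSeq y) : BddSeq (x + y) := by
  obtain ⟨M, hM⟩ := hx
  obtain ⟨N, hN⟩ := hy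
  exact ⟨M + N, fun n => (abs_add_le _ _).trans (add_le_add (hM n) (hN n))⟩

theorem sub (hx : BddSeq x) (hy : BddSeq y) : BddSeq (x - y) := by
  simpa only [sub_eq_add_neg] using hx.add hy.neg

theorem of_abs_le_mul_log {a : ℕ → ℝ} {C : ℝ} (h : ∀ n, |a n| ≤ C * log (n + 2)) :
    BddSeq fun n => a n / log (n + 2) := by
  refine ⟨C, fun n => ?_⟩
  have hL : 0 < log ((n : ℝ) + 2) := log_pos (by linarith [n.cast_nonneg (α := ℝ)])
  rw [abs_div, abs_of_pos hL, div_le_iff₀ hL]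
  exact h n

theorem of_abs_le_mul_log_two_mul {a : ℕ → ℝ} {C : ℝ} (h : ∀ n, |a n| ≤ C * log (n + 2)) :
    BddSeq fun n => a (2 * n + 2) / log (n + 2) := by
  have hC : 0 ≤ C :=
    nonneg_of_mul_nonneg_left ((abs_nonneg _).trans (h 0)) (by simpa using log_pos one_lt_two)
  refine of_abs_le_mul_log (C := 2 * C) fun n => (h _).trans ?_
  have hlog : log (2 * n + 4) ≤ 2 * log (n + 2) :=
    calc log (2 * n + 4) ≤ log (((n : ℝ) + 2) ^ 2) :=
          log_le_log (by positivity) (by nlinarith [n.cast_nonneg (α := ℝ)])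
      _ = 2 * log (n + 2) := by rw [log_pow]; norm_num
  push_cast
  rw [show (2 : ℝ) * n + 2 + 2 = 2 * n + 4 by ring]
  nlinarith [mul_le_mul_of_nonneg_left hlog hC]

end BddSeq

theorem tendsto_log_add_two : Tendsto (fun n : ℕ => log ((n : ℝ) + 2)) atTop atTop :=
  tendsto_log_atTop.comp (tendsto_atTop_add_const_right _ _ tendsto_natCast_atTop_atTop)

theorem norm_div_log_half_sub_div_log_le {a : ℕ → ℝ} {B C : ℝ}
    (hinc : ∀ n, |a (n + 1) - a n| ≤ B) (hlog : ∀ n, |a n| ≤ C * log (n + 2)) (j : ℕ) :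
    ‖a (2 * (j / 2) + 2) / log ((j / 2 : ℕ) + 2) - a j / log (j + 2)‖
      ≤ (2 * B + C * log 2) / log ((j / 2 : ℕ) + 2) := by
  set L : ℕ → ℝ := fun n => log ((n : ℝ) + 2)
  have hL : ∀ n, 0 < L n := fun n => log_pos (by linarith [n.cast_nonneg (α := ℝ)])
  set P := j / 2
  have hB : 0 ≤ B := (abs_nonneg _).trans (hinc 0)
  have hstep : |a (2 * P + 2) - a j| ≤ 2 * B := by
    obtain hj | hj : j = 2 * P ∨ j = 2 * P + 1 := by omega
    · rw [hj, show a (2 * P + 2) - a (2 * P)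
          = (a (2 * P + 1 + 1) - a (2 * P + 1)) + (a (2 * P + 1) - a (2 * P)) by ring]
      linarith [abs_add_le (a (2 * P + 1 + 1) - a (2 * P + 1)) (a (2 * P + 1) - a (2 * P)),
        hinc (2 * P + 1), hinc (2 * P)]
    · rw [hj]; linarith [hinc (2 * P + 1)]
  have hLP : L j - L P ≤ log 2 := by
    have hj : (j : ℝ) ≤ 2 * P + 1 := by exact_mod_cast (by omega : j ≤ 2 * P + 1)
    have : L j ≤ log (2 * ((P : ℝ) + 2)) := log_le_log (by positivity) (by linarith)
    rw [log_mul two_ne_zero (by positivity)] at this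
    linarith
  have hPj : L P ≤ L j := log_le_log (by positivity) (by gcongr; omega)
  have haj : |a j / L j| ≤ C := by
    rw [abs_div, abs_of_pos (hL j), div_le_iff₀ (hL j)]; exact hlog j
  have hC : 0 ≤ C := (abs_nonneg _).trans haj
  have hsplit : a (2 * P + 2) / L P - a j / L j
      = ((a (2 * P + 2) - a j) + a j / L j * (L j - L P)) / L P := by
    field_simp [(hL j).ne', (hL P).ne']; ring
  rw [Real.norm_eq_abs, hsplit, abs_div, abs_of_pos (hL P)]
  refine div_le_div_of_nonneg_right ?_ (hL P).le
  calc |a (2 * P + 2) - a j + a j / L j * (L j - L P)|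
      ≤ |a (2 * P + 2) - a j| + |a j / L j| * |L j - L P| := by
        rw [← abs_mul]; exact abs_add_le _ _
    _ ≤ 2 * B + C * log 2 := by
        rw [abs_of_nonneg (sub_nonneg.2 hPj)]
        gcongr

namespace ExtLimit

variable {ω : (ℕ → ℝ) → ℝ} {x y u v : ℕ → ℝ}

theorem map_neg (hω : ExtLimit ω) (hx : BddSeq x) : ω (-x) = -ω x := by
  simpa using hω.map_smul (-1) x hx

theorem map_sub (hω : ExtLimit ω) (hx : BddSeq x) (hy : BddSeq y) : ω (x - y) = ω x - ω y := by
  rw [sub_eq_add_neg, hω.map_add x (-y) hx hy.neg, hω.map_neg hy, sub_eq_add_neg]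

theorem mono (hω : ExtLimit ω) (hx : BddSeq x) (hy : BddSeq y) (h : x ≤ y) : ω x ≤ ω y := by
  have := hω.pos (y - x) (hy.sub hx) fun n => sub_nonneg.2 (h n)
  rwa [hω.map_sub hy hx, sub_nonneg] at this

theorem eq_of_tendsto_sub (hω : ExtLimit ω) (hx : BddSeq x) (hy : BddSeq y)
    (h : Tendsto (fun n => x n - y n) atTop (𝓝 0)) : ω x = ω y := by
  have := hω.extends_limit _ 0 h
  rwa [← Pi.sub_def, hω.map_sub hx hy, sub_eq_zero] at this

theorem eq_of_abs_sub_le (hω : ExtLimit ω) (hx : BddSeq x) (hy : BddSeq y) (hu : BddSeq u)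
    (hv : BddSeq v) (huv : ω u = ω v) (c : ℝ) (h : ∀ n, |x n - y n| ≤ c * (v n - u n)) :
    ω x = ω y := by
  have hd : ω (c • (v - u)) = 0 := by
    rw [hω.map_smul c _ (hv.sub hu), hω.map_sub hv hu, huv, sub_self, mul_zero]
  have hbd : BddSeq (c • (v - u)) := by
    obtain ⟨B, hB⟩ := hv.sub hu
    exact ⟨|c| * B, fun n => by
      simpa [abs_mul] using mul_le_mul_of_nonneg_left (hB n) (abs_nonneg c)⟩
  have hxy := hω.mono (hx.sub hy) hbd fun n => (le_abs_self _).trans (h n)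
  have hyx := hω.mono (hy.sub hx) hbd fun n =>
    (le_abs_self _).trans ((abs_sub_comm _ _).trans_le (h n))
  rw [hω.map_sub hx hy, hd] at hxy
  rw [hω.map_sub hy hx, hd] at hyx
  linarith

/-- Dilation invariance applies since `σ₂` of the left-hand sequence differs from the right-hand
one by `O(1 / log n)`. -/
theorem map_two_mul_div_log (hω : ExtLimit ω) {a : ℕ → ℝ} {B C : ℝ}
    (hinc : ∀ n, |a (n + 1) - a n| ≤ B) (hlog : ∀ n, |a n| ≤ C * log (n + 2)) :
    ω (fun n => a (2 * n + 2) / log (n + 2)) = ω (fun n => a n / log (n + 2)) := by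
  have hv := BddSeq.of_abs_le_mul_log_two_mul hlog
  have hσv : BddSeq fun j => a (2 * (j / 2) + 2) / log ((j / 2 : ℕ) + 2) := by
    obtain ⟨M, hM⟩ := hv
    exact ⟨M, fun j => hM (j / 2)⟩
  rw [← hω.dilation_invariant _ hv 2 le_rfl]
  exact hω.eq_of_tendsto_sub hσv (BddSeq.of_abs_le_mul_log hlog) <|
    squeeze_zero_norm (fun j => norm_div_log_half_sub_div_log_le hinc hlog j) <|
      tendsto_const_nhds.div_atTop
        (tendsto_log_add_two.comp (Nat.tendsto_div_const_atTop two_ne_zero))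

theorem extC_eq_of_norm_sub_le (hω : ExtLimit ω) {x y : ℕ → ℂ} (hx : ∃ M, ∀ n, ‖x n‖ ≤ M)
    (hy : ∃ M, ∀ n, ‖y n‖ ≤ M) (hu : BddSeq u) (hv : BddSeq v) (huv : ω u = ω v) (c : ℝ)
    (h : ∀ n, ‖x n - y n‖ ≤ c * (v n - u n)) : extC ω x = extC ω y := by
  have hre : ∀ z : ℕ → ℂ, (∃ M, ∀ n, ‖z n‖ ≤ M) → BddSeq fun n => (z n).re :=
    fun z ⟨M, hM⟩ => ⟨M, fun n => (Complex.abs_re_le_norm _).trans (hM n)⟩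
  have him : ∀ z : ℕ → ℂ, (∃ M, ∀ n, ‖z n‖ ≤ M) → BddSeq fun n => (z n).im :=
    fun z ⟨M, hM⟩ => ⟨M, fun n => (Complex.abs_im_le_norm _).trans (hM n)⟩
  unfold extC
  rw [hω.eq_of_abs_sub_le (hre x hx) (hre y hy) hu hv huv c fun n => ?_,
    hω.eq_of_abs_sub_le (him x hx) (him y hy) hu hv huv c fun n => ?_]
  · rw [← Complex.sub_im]; exact (Complex.abs_im_le_norm _).trans (h n)
  · rw [← Complex.sub_re]; exact (Complex.abs_re_le_norm _).trans (h n)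

end ExtLimit

def heatWeight (α t s : ℝ) : ℝ := s * exp (-(t * s) ^ (-α))

def cutWeight (t s : ℝ) : ℝ := max (s - t⁻¹) 0

section Weights

variable {α t s : ℝ}

theorem heatWeight_nonneg (hs : 0 ≤ s) : 0 ≤ heatWeight α t s :=
  mul_nonneg hs (exp_nonneg _)

theorem heatWeight_le_self (ht : 0 ≤ t) (hs : 0 ≤ s) : heatWeight α t s ≤ s :=
  mul_le_of_le_one_right hs (exp_le_one_iff.2 (neg_nonpos.2 (rpow_nonneg (mul_nonneg ht hs) _)))

theorem heatWeight_le_mul_sq (hα : 1 ≤ α) (ht : 0 < t) (hs : 0 ≤ s) :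
    heatWeight α t s ≤ t * s ^ 2 := by
  rcases hs.eq_or_lt with rfl | hs
  · simp [heatWeight]
  have hts : 0 < t * s := mul_pos ht hs
  suffices exp (-(t * s) ^ (-α)) ≤ t * s by
    calc heatWeight α t s ≤ s * (t * s) := mul_le_mul_of_nonneg_left this hs.le
      _ = t * s ^ 2 := by ring
  rcases le_or_gt (t * s) 1 with h1 | h1
  · have hx : 0 < (t * s) ^ (-α) := rpow_pos_of_pos hts _
    calc exp (-(t * s) ^ (-α)) ≤ ((t * s) ^ (-α))⁻¹ := by
          rw [exp_neg]
          exact inv_anti₀ hx ((le_add_of_nonneg_right zero_le_one).trans (add_one_le_exp _))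
      _ = (t * s) ^ α := by rw [rpow_neg hts.le, inv_inv]
      _ ≤ (t * s) ^ (1 : ℝ) := rpow_le_rpow_of_exponent_ge hts h1 hα
      _ = t * s := rpow_one _
  · exact (exp_le_one_iff.2 (neg_nonpos.2 (rpow_nonneg hts.le _))).trans h1.le

theorem cutWeight_nonneg : 0 ≤ cutWeight t s := le_max_right _ _

/-- Uses `exp (-x) ≥ 1 - x` with `x = (t s)^(-α)`, and `s (t s)^(-α) ≤ t⁻¹` once `t s ≥ 1`. -/
theorem cutWeight_le_heatWeight (hα : 1 ≤ α) (ht : 0 < t) (hs : 0 ≤ s) :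
    cutWeight t s ≤ heatWeight α t s := by
  rcases le_or_gt s t⁻¹ with h1 | h1
  · rw [cutWeight, max_eq_right (by linarith)]; exact heatWeight_nonneg hs
  have hts : 1 < t * s := by rwa [inv_lt_iff_one_lt_mul₀ ht, mul_comm] at h1
  have hsx : s * (t * s) ^ (-α) ≤ t⁻¹ := by
    have : (t * s) ^ (1 - α) ≤ 1 := rpow_le_one_of_one_le_of_nonpos hts.le (by linarith)
    calc s * (t * s) ^ (-α) = t⁻¹ * (t * s) ^ (1 - α) := by
          rw [rpow_sub (by linarith), rpow_one, rpow_neg (by linarith)]; field_simp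
      _ ≤ t⁻¹ := mul_le_of_le_one_right (inv_nonneg.2 ht.le) this
  rw [cutWeight, max_eq_left (by linarith)]
  calc s - t⁻¹ ≤ s * (1 - (t * s) ^ (-α)) := by linarith
    _ ≤ heatWeight α t s :=
        mul_le_mul_of_nonneg_left (by linarith [add_one_le_exp (-(t * s) ^ (-α))]) hs

theorem heatWeight_sub_cutWeight_le (hα : 1 ≤ α) (ht : 0 < t) (hs : 0 ≤ s) :
    heatWeight α t s - cutWeight t s ≤ min ((t * s) ^ 2) 1 / t := by
  rcases le_or_gt (t * s) 1 with h1 | h1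
  · rw [min_eq_left (by nlinarith [mul_nonneg ht.le hs])]
    calc heatWeight α t s - cutWeight t s ≤ t * s ^ 2 :=
          by linarith [heatWeight_le_mul_sq hα ht hs, cutWeight_nonneg (t := t) (s := s)]
      _ = (t * s) ^ 2 / t := by field_simp
  · have hcut : cutWeight t s = s - t⁻¹ := by
      refine max_eq_left (sub_nonneg.2 ?_)
      rw [inv_le_iff_one_le_mul₀ ht, mul_comm]; exact h1.le
    rw [min_eq_right (by nlinarith), hcut, one_div]
    linarith [heatWeight_le_self (α := α) ht.le hs]

end Weights

theorem mu_nonneg {E : Type} [NormedAddCommGroup E] [InnerProductSpace ℂ E] (T : E →L[ℂ] E)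
    (k : ℕ) : 0 ≤ mu T k :=
  le_csInf ⟨‖T - 0‖, 0, by simp, rfl⟩ (by rintro _ ⟨F, -, rfl⟩; exact norm_nonneg _)

theorem mu_antitone {E : Type} [NormedAddCommGroup E] [InnerProductSpace ℂ E] (T : E →L[ℂ] E) :
    Antitone (mu T) := fun k l hkl =>
  csInf_le_csInf ⟨0, by rintro _ ⟨F, -, rfl⟩; exact norm_nonneg _⟩ ⟨‖T - 0‖, 0, by simp, rfl⟩
    (by rintro _ ⟨F, hF, rfl⟩; exact ⟨F, hF.trans (by exact_mod_cast hkl), rfl⟩)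

structure IsM1infSeq (S : ℕ → ℝ) : Prop where
  nonneg : 0 ≤ S
  antitone : Antitone S
  exists_sum_le : ∃ M, ∀ n : ℕ, ∑ k ∈ range (n + 1), S k ≤ M * log (2 + n)

theorem IsM1infSeq.of_memM1inf {E : Type} [NormedAddCommGroup E] [InnerProductSpace ℂ E]
    {V : E →L[ℂ] E} (hV : MemM1inf V) : IsM1infSeq (mu V) :=
  ⟨mu_nonneg V, mu_antitone V, hV.2⟩

theorem summable_sqrt_mul_log_div_sq :
    Summable fun k : ℕ => √(k + 1) * (log (k + 2) / (k + 1)) ^ 2 := by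
  have hsum : Summable fun k : ℕ => 256 * ((k + 2 : ℕ) : ℝ) ^ (-(5 / 4) : ℝ) :=
    ((summable_nat_add_iff 2).2 (summable_nat_rpow.2 (by norm_num))).mul_left 256
  refine hsum.of_nonneg_of_le (fun k => by positivity) fun k => ?_
  push_cast
  set y : ℝ := k + 2 with hy
  have hy2 : 2 ≤ y := by linarith [k.cast_nonneg (α := ℝ)]
  have hy0 : 0 < y := by linarith
  have hx : (k : ℝ) + 1 = y - 1 := by ring
  have hlog : log y ≤ 8 * y ^ (1 / 8 : ℝ) := by
    have := log_le_rpow_div hy0.le (ε := 1 / 8) (by norm_num)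
    rwa [div_eq_mul_inv, inv_div, div_one, mul_comm] at this
  have hsqrt : √(y - 1) ≤ y ^ (1 / 2 : ℝ) := by rw [← sqrt_eq_rpow]; gcongr; linarith
  have hq : log y / (y - 1) ≤ 8 * y ^ (1 / 8 : ℝ) / (y / 2) :=
    div_le_div₀ (by positivity) hlog (by positivity) (by linarith)
  have hq0 : 0 ≤ log y / (y - 1) := div_nonneg (log_nonneg (by linarith)) (by linarith)
  rw [hx]
  calc √(y - 1) * (log y / (y - 1)) ^ 2 ≤ y ^ (1 / 2 : ℝ) * (8 * y ^ (1 / 8 : ℝ) / (y / 2)) ^ 2 :=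
        mul_le_mul hsqrt (pow_le_pow_left₀ hq0 hq 2) (sq_nonneg _) (by positivity)
    _ = 256 * y ^ (-(5 / 4) : ℝ) := by
        rw [show (-(5 / 4) : ℝ) = 1 / 2 + 1 / 8 + 1 / 8 - 2 by norm_num, rpow_sub hy0,
          rpow_add hy0, rpow_add hy0, rpow_two]
        field_simp
        ring

namespace IsM1infSeq

variable {S : ℕ → ℝ}

theorem exists_nonneg_sum_le (hS : IsM1infSeq S) :
    ∃ M, 0 ≤ M ∧ ∀ n : ℕ, ∑ k ∈ range (n + 1), S k ≤ M * log (2 + n) := by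
  obtain ⟨M, hM⟩ := hS.exists_sum_le
  have h0 : S 0 ≤ M * log 2 := by simpa using hM 0
  exact ⟨M, nonneg_of_mul_nonneg_left ((hS.nonneg 0).trans h0) (log_pos (by norm_num)), hM⟩

theorem summable_sqrt_mul_sq (hS : IsM1infSeq S) : Summable fun k : ℕ => √(k + 1) * S k ^ 2 := by
  obtain ⟨M, -, hM⟩ := hS.exists_nonneg_sum_le
  have hle : ∀ k : ℕ, S k ≤ M * (log (k + 2) / (k + 1)) := fun k => by
    have := (card_nsmul_le_sum (range (k + 1)) S (S k) fun j hj =>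
      hS.antitone (Nat.lt_succ_iff.1 (mem_range.1 hj))).trans (hM k)
    rw [card_range, nsmul_eq_mul] at this
    rw [← mul_div_assoc, le_div_iff₀ (by positivity)]
    push_cast at this
    rw [add_comm (2 : ℝ)] at this
    linarith
  refine (summable_sqrt_mul_log_div_sq.mul_left (M ^ 2)).of_nonneg_of_le
    (fun k => by positivity) fun k => ?_
  calc √(k + 1) * S k ^ 2 ≤ √(k + 1) * (M * (log (k + 2) / (k + 1))) ^ 2 := by
        gcongr; exacts [hS.nonneg k, hle k]
    _ = M ^ 2 * (√(k + 1) * (log (k + 2) / (k + 1)) ^ 2) := by ring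

theorem summable_sq (hS : IsM1infSeq S) : Summable fun k => S k ^ 2 :=
  hS.summable_sqrt_mul_sq.of_nonneg_of_le (fun k => sq_nonneg _) fun k =>
    le_mul_of_one_le_left (sq_nonneg _) (one_le_sqrt.2 (by linarith [k.cast_nonneg (α := ℝ)]))

/-- Split the series at `k = m²`: the head is controlled by the partial sums of `S`,
the tail by the weight `√(k + 1) ≥ m` of `summable_sqrt_mul_sq`. -/
theorem exists_tsum_le_mul_log (hS : IsM1infSeq S) :
    ∃ K, ∀ m : ℕ, 2 ≤ m → ∀ F : ℕ → ℝ, 0 ≤ F → F ≤ S → (∀ k, F k ≤ m * S k ^ 2) →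
      Summable F ∧ ∑' k, F k ≤ K * log m := by
  obtain ⟨M, hM0, hM⟩ := hS.exists_nonneg_sum_le
  set w := fun k : ℕ => √(k + 1) * S k ^ 2
  have hw : Summable w := hS.summable_sqrt_mul_sq
  have hw0 : ∀ k, 0 ≤ w k := fun k => by positivity
  refine ⟨3 * M + (∑' k, w k) / log 2, fun m hm F hF0 hFS hFm => ?_⟩
  have hm' : (2 : ℝ) ≤ m := by exact_mod_cast hm
  have hF : Summable F := (hS.summable_sq.mul_left (m : ℝ)).of_nonneg_of_le hF0 hFm
  have hm1 : 1 ≤ m ^ 2 := Nat.one_le_pow _ _ (by omega)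
  have hhead : ∑ k ∈ range (m ^ 2), F k ≤ 3 * M * log m :=
    calc ∑ k ∈ range (m ^ 2), F k ≤ ∑ k ∈ range (m ^ 2), S k := sum_le_sum fun k _ => hFS k
      _ ≤ M * log (2 + ((m ^ 2 - 1 : ℕ) : ℝ)) := by
          have := hM (m ^ 2 - 1)
          rwa [Nat.sub_add_cancel hm1] at this
      _ ≤ M * log ((m : ℝ) ^ 3) := by
          gcongr
          push_cast [hm1]
          nlinarith
      _ = 3 * M * log m := by rw [log_pow]; push_cast; ring
  have htail : ∑' k, F (k + m ^ 2) ≤ ∑' k, w k :=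
    calc ∑' k, F (k + m ^ 2) ≤ ∑' k, w (k + m ^ 2) := by
          refine ((summable_nat_add_iff _).2 hF).tsum_le_tsum (fun k => (hFm _).trans ?_)
            ((summable_nat_add_iff _).2 hw)
          refine mul_le_mul_of_nonneg_right ?_ (sq_nonneg _)
          rw [le_sqrt (by positivity) (by positivity)]
          push_cast; linarith [k.cast_nonneg (α := ℝ)]
      _ ≤ ∑' k, w k := tsum_comp_le_tsum_of_inj hw hw0 (add_left_injective _)
  have hlog : (∑' k, w k) ≤ (∑' k, w k) / log 2 * log m := by
    rw [div_mul_eq_mul_div, le_div_iff₀ (log_pos (by norm_num))]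
    exact mul_le_mul_of_nonneg_left (log_le_log (by norm_num) hm') (tsum_nonneg hw0)
  refine ⟨hF, ?_⟩
  rw [← hF.sum_add_tsum_nat_add (m ^ 2)]
  linarith

end IsM1infSeq

/-- The `j`-th term is at most `4 / (j + c) - 4 / (j + 1 + c)` with `c = s⁻¹`, so the sum
telescopes. -/
theorem sum_range_min_sq_one_div_sq_le {s : ℝ} (hs : 0 ≤ s) (m : ℕ) :
    ∑ j ∈ range m, min (s ^ 2) (1 / ((j : ℝ) + 1) ^ 2) ≤ 4 * s := by
  rcases hs.eq_or_lt with rfl | hs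
  · simpa using sum_nonpos fun j _ => min_le_left (0 : ℝ) _
  set c := s⁻¹
  have hc : 0 < c := inv_pos.2 hs
  have hs2 : s ^ 2 = 1 / c ^ 2 := by simp [c]
  have hstep : ∀ j : ℕ, min (s ^ 2) (1 / ((j : ℝ) + 1) ^ 2)
      ≤ 4 / ((j : ℕ) + c) - 4 / (((j + 1 : ℕ) : ℝ) + c) := fun j => by
    have hj := j.cast_nonneg (α := ℝ)
    have e : 4 / ((j : ℝ) + c) - 4 / (((j + 1 : ℕ) : ℝ) + c) = 4 / ((j + c) * (j + 1 + c)) := by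
      push_cast; field_simp; ring
    rw [e]
    rcases le_total c (j + 1) with h | h
    · refine (min_le_right _ _).trans ?_
      rw [div_le_div_iff₀ (by positivity) (by positivity)]
      nlinarith
    · refine (min_le_left _ _).trans ?_
      rw [hs2, div_le_div_iff₀ (by positivity) (by positivity)]
      nlinarith
  calc ∑ j ∈ range m, min (s ^ 2) (1 / ((j : ℝ) + 1) ^ 2)
      ≤ ∑ j ∈ range m, (4 / ((j : ℕ) + c) - 4 / (((j + 1 : ℕ) : ℝ) + c)) :=
        sum_le_sum fun j _ => hstep j
    _ = 4 / c - 4 / (m + c) := by rw [sum_range_sub' (fun j : ℕ => 4 / ((j : ℝ) + c))]; simp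
    _ ≤ 4 * s := by
        have : 0 ≤ 4 / ((m : ℝ) + c) := by positivity
        rw [div_eq_mul_inv, inv_inv]; linarith

/-- `truncSq S t` is the trace of `min ((t V)², 1)` when `S = μ(·, V)`. -/
def truncSq (S : ℕ → ℝ) (t : ℝ) : ℝ := ∑' k, min ((t * S k) ^ 2) 1

def truncSqSum (S : ℕ → ℝ) (m : ℕ) : ℝ := ∑ j ∈ range m, truncSq S (j + 1) / (j + 1) ^ 2

theorem min_mul_sq_one_div_sq {t : ℝ} (ht : t ≠ 0) (s : ℝ) :
    min ((t * s) ^ 2) 1 / t ^ 2 = min (s ^ 2) (1 / t ^ 2) := by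
  rw [← min_div_div_right (sq_nonneg t), mul_pow, mul_div_cancel_left₀ _ (pow_ne_zero 2 ht)]

theorem truncSq_nonneg (S : ℕ → ℝ) (t : ℝ) : 0 ≤ truncSq S t :=
  tsum_nonneg fun _ => le_min (sq_nonneg _) zero_le_one

theorem truncSqSum_nonneg (S : ℕ → ℝ) (m : ℕ) : 0 ≤ truncSqSum S m :=
  sum_nonneg fun _ _ => div_nonneg (truncSq_nonneg S _) (sq_nonneg _)

theorem truncSqSum_mono (S : ℕ → ℝ) : Monotone (truncSqSum S) := fun _ _ h =>
  sum_le_sum_of_subset_of_nonneg (range_subset_range.2 h) fun _ _ _ =>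
    div_nonneg (truncSq_nonneg S _) (sq_nonneg _)

theorem truncSqSum_succ_sub (S : ℕ → ℝ) (m : ℕ) :
    truncSqSum S (m + 1) - truncSqSum S m = truncSq S (m + 1) / (m + 1) ^ 2 := by
  simp [truncSqSum, sum_range_succ]

theorem truncSq_div_sq (S : ℕ → ℝ) {t : ℝ} (ht : t ≠ 0) :
    truncSq S t / t ^ 2 = ∑' k, min (S k ^ 2) (1 / t ^ 2) := by
  simp only [truncSq, ← tsum_div_const, min_mul_sq_one_div_sq ht]

namespace IsM1infSeq

variable {S : ℕ → ℝ}

theorem summable_min_sq (hS : IsM1infSeq S) (t : ℝ) : Summable fun k => min ((t * S k) ^ 2) 1 :=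
  (hS.summable_sq.mul_left (t ^ 2)).of_nonneg_of_le (fun _ => le_min (sq_nonneg _) zero_le_one)
    fun k => (min_le_left _ _).trans_eq (mul_pow t (S k) 2)

theorem truncSq_mono (hS : IsM1infSeq S) {t t' : ℝ} (ht : 0 ≤ t) (htt' : t ≤ t') :
    truncSq S t ≤ truncSq S t' :=
  (hS.summable_min_sq t).tsum_le_tsum (fun k => min_le_min_right _ <| pow_le_pow_left₀
    (mul_nonneg ht (hS.nonneg k)) (mul_le_mul_of_nonneg_right htt' (hS.nonneg k)) 2)
    (hS.summable_min_sq t')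

theorem summable_min_sq_right (hS : IsM1infSeq S) {c : ℝ} (hc : 0 ≤ c) :
    Summable fun k => min (S k ^ 2) c :=
  hS.summable_sq.of_nonneg_of_le (fun _ => le_min (sq_nonneg _) hc) fun _ => min_le_left _ _

theorem truncSqSum_succ_sub_le (hS : IsM1infSeq S) (m : ℕ) :
    truncSqSum S (m + 1) - truncSqSum S m ≤ ∑' k, S k ^ 2 := by
  rw [truncSqSum_succ_sub, truncSq_div_sq S (by positivity)]
  exact (hS.summable_min_sq_right (by positivity)).tsum_le_tsum (fun _ => min_le_left _ _)
    hS.summable_sq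

theorem truncSqSum_eq_tsum (hS : IsM1infSeq S) (m : ℕ) :
    truncSqSum S m = ∑' k, ∑ j ∈ range m, min (S k ^ 2) (1 / ((j : ℝ) + 1) ^ 2) := by
  rw [Summable.tsum_finsetSum fun j _ => hS.summable_min_sq_right (by positivity)]
  exact sum_congr rfl fun j _ => truncSq_div_sq S (by positivity)

theorem exists_truncSqSum_le_mul_log (hS : IsM1infSeq S) :
    ∃ K, ∀ m : ℕ, 2 ≤ m → truncSqSum S m ≤ K * log m := by
  obtain ⟨K, hK⟩ := hS.exists_tsum_le_mul_log
  refine ⟨4 * K, fun m hm => ?_⟩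
  set F := fun k => (∑ j ∈ range m, min (S k ^ 2) (1 / ((j : ℝ) + 1) ^ 2)) / 4
  have hF := hK m hm F (fun k => by positivity)
    (fun k => show _ / 4 ≤ S k by linarith [sum_range_min_sq_one_div_sq_le (hS.nonneg k) m])
    fun k => show _ / 4 ≤ _ from calc
      _ ≤ (∑ _j ∈ range m, S k ^ 2) / 4 := by gcongr; exact min_le_left _ _
      _ ≤ m * S k ^ 2 := by
          rw [sum_const, card_range, nsmul_eq_mul]
          nlinarith [sq_nonneg (S k), m.cast_nonneg (α := ℝ)]
  rw [hS.truncSqSum_eq_tsum, show (∑' k, ∑ j ∈ range m, min (S k ^ 2) (1 / ((j : ℝ) + 1) ^ 2))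
    = 4 * ∑' k, F k by rw [tsum_div_const]; ring]
  linarith [hF.2]

/-- The terms of `truncSqSum S (2 m) - truncSqSum S m` are at least `truncSq S m / (2 m)²`. -/
theorem truncSq_div_le_sub (hS : IsM1infSeq S) {m : ℕ} (hm : 0 < m) :
    truncSq S m / m ≤ 4 * (truncSqSum S (2 * m) - truncSqSum S m) := by
  have hm' : (0 : ℝ) < m := by exact_mod_cast hm
  have hdiff : truncSqSum S (2 * m) - truncSqSum S m
      = ∑ j ∈ Ico m (2 * m), truncSq S (j + 1) / ((j : ℝ) + 1) ^ 2 := by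
    rw [truncSqSum, truncSqSum, ← sum_range_add_sum_Ico _ (by omega : m ≤ 2 * m),
      add_sub_cancel_left]
  have hterm : ∀ j ∈ Ico m (2 * m),
      truncSq S m / (2 * m) ^ 2 ≤ truncSq S (j + 1) / ((j : ℝ) + 1) ^ 2 :=
    fun j hj => by
      obtain ⟨h1, h2⟩ := mem_Ico.1 hj
      have h1' : (m : ℝ) ≤ j + 1 := by exact_mod_cast (by omega : m ≤ j + 1)
      have h2' : (j : ℝ) + 1 ≤ 2 * m := by exact_mod_cast (by omega : j + 1 ≤ 2 * m)
      exact div_le_div₀ (truncSq_nonneg S _) (hS.truncSq_mono hm'.le h1') (by positivity)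
        (pow_le_pow_left₀ (by positivity) h2' 2)
  have hsum := card_nsmul_le_sum _ _ _ hterm
  rw [Nat.card_Ico, show 2 * m - m = m by omega, nsmul_eq_mul] at hsum
  rw [hdiff]
  calc truncSq S m / m = 4 * (m * (truncSq S m / (2 * m) ^ 2)) := by field_simp; ring
    _ ≤ _ := by gcongr

end IsM1infSeq

def logTrace (w : ℕ → ℕ → ℝ) (a : ℕ → ℂ) (n : ℕ) : ℂ :=
  (((log ((n : ℝ) + 2))⁻¹ : ℝ) : ℂ) * ∑' k, (w n k : ℂ) * a k

section LogTrace

variable {w w' : ℕ → ℕ → ℝ} {a : ℕ → ℂ} {R : ℝ} {n : ℕ}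

theorem norm_ofReal_mul_le {r : ℝ} {z : ℂ} (hr : 0 ≤ r) (hz : ‖z‖ ≤ R) : ‖(r : ℂ) * z‖ ≤ r * R := by
  rw [norm_mul, Complex.norm_real, Real.norm_of_nonneg hr]
  exact mul_le_mul_of_nonneg_left hz hr

theorem summable_ofReal_mul {v : ℕ → ℝ} (hv0 : 0 ≤ v) (hv : Summable v) (ha : ∀ k, ‖a k‖ ≤ R) :
    Summable fun k => (v k : ℂ) * a k :=
  Summable.of_norm_bounded (hv.mul_right R) fun k => norm_ofReal_mul_le (hv0 k) (ha k)

theorem norm_logTrace_le (hw0 : 0 ≤ w n) (hw : Summable (w n)) (ha : ∀ k, ‖a k‖ ≤ R) :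
    ‖logTrace w a n‖ ≤ (log (n + 2))⁻¹ * ((∑' k, w n k) * R) := by
  have hL : 0 ≤ (log ((n : ℝ) + 2))⁻¹ :=
    inv_nonneg.2 (log_nonneg (by linarith [n.cast_nonneg (α := ℝ)]))
  rw [logTrace, norm_mul, Complex.norm_real, Real.norm_of_nonneg hL, ← tsum_mul_right]
  exact mul_le_mul_of_nonneg_left
    (tsum_of_norm_bounded (hw.mul_right R).hasSum fun k => norm_ofReal_mul_le (hw0 k) (ha k)) hL

theorem norm_logTrace_le_mul (hw0 : 0 ≤ w n) (hw : Summable (w n)) (ha : ∀ k, ‖a k‖ ≤ R)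
    {K : ℝ} (hK : ∑' k, w n k ≤ K * log (n + 2)) : ‖logTrace w a n‖ ≤ K * R := by
  have hL : 0 < log ((n : ℝ) + 2) := log_pos (by linarith [n.cast_nonneg (α := ℝ)])
  have hR : 0 ≤ R := (norm_nonneg _).trans (ha 0)
  refine (norm_logTrace_le hw0 hw ha).trans ?_
  rw [inv_mul_le_iff₀ hL]
  nlinarith [mul_le_mul_of_nonneg_right hK hR]

theorem logTrace_sub (hw0 : 0 ≤ w n) (hw : Summable (w n)) (hw'0 : 0 ≤ w' n)
    (hw' : Summable (w' n)) (ha : ∀ k, ‖a k‖ ≤ R) :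
    logTrace w' a n - logTrace w a n = logTrace (w' - w) a n := by
  rw [logTrace, logTrace, logTrace, ← mul_sub,
    ← (summable_ofReal_mul hw'0 hw' ha).tsum_sub (summable_ofReal_mul hw0 hw ha)]
  simp only [Pi.sub_apply, Complex.ofReal_sub, sub_mul]

end LogTrace

namespace IsM1infSeq

variable {S : ℕ → ℝ} {α : ℝ}

theorem exists_tsum_heatWeight_le (hα : 1 ≤ α) (hS : IsM1infSeq S) :
    ∃ K, ∀ n : ℕ, Summable (fun k => heatWeight α (n + 2) (S k)) ∧
      ∑' k, heatWeight α (n + 2) (S k) ≤ K * log (n + 2) := by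
  obtain ⟨K, hK⟩ := hS.exists_tsum_le_mul_log
  refine ⟨K, fun n => ?_⟩
  have ht : (0 : ℝ) < n + 2 := by positivity
  simpa using hK (n + 2) (by omega) _ (fun k => heatWeight_nonneg (hS.nonneg k))
    (fun k => heatWeight_le_self ht.le (hS.nonneg k))
    fun k => by push_cast; exact heatWeight_le_mul_sq hα ht (hS.nonneg k)

theorem summable_cutWeight (hα : 1 ≤ α) (hS : IsM1infSeq S) {t : ℝ} (ht : 0 < t)
    (hX : Summable fun k => heatWeight α t (S k)) : Summable fun k => cutWeight t (S k) :=
  hX.of_nonneg_of_le (fun _ => cutWeight_nonneg) fun k =>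
    cutWeight_le_heatWeight hα ht (hS.nonneg k)

theorem tsum_heatWeight_sub_cutWeight_le (hα : 1 ≤ α) (hS : IsM1infSeq S) {t : ℝ} (ht : 0 < t)
    (hX : Summable fun k => heatWeight α t (S k)) :
    ∑' k, (heatWeight α t (S k) - cutWeight t (S k)) ≤ truncSq S t / t := by
  rw [truncSq, ← tsum_div_const]
  exact (hX.sub (hS.summable_cutWeight hα ht hX)).tsum_le_tsum
    (fun k => heatWeight_sub_cutWeight_le hα ht (hS.nonneg k)) ((hS.summable_min_sq t).div_const t)

theorem norm_logTrace_heatWeight_sub_cutWeight_le {a : ℕ → ℂ} {R : ℝ} (hα : 1 ≤ α)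
    (hS : IsM1infSeq S) (ha : ∀ k, ‖a k‖ ≤ R) {n : ℕ}
    (hX : Summable fun k => heatWeight α (n + 2) (S k)) :
    ‖logTrace (fun n k => heatWeight α (n + 2) (S k)) a n
        - logTrace (fun n k => cutWeight (n + 2) (S k)) a n‖
      ≤ 4 * R * (truncSqSum S (2 * n + 2 + 2) / log (n + 2)
        - truncSqSum S (n + 2) / log (n + 2)) := by
  have ht : (0 : ℝ) < n + 2 := by positivity
  have hR : 0 ≤ R := (norm_nonneg _).trans (ha 0)
  have hY := hS.summable_cutWeight hα ht hX
  have hYX : ∀ k, cutWeight (n + 2) (S k) ≤ heatWeight α (n + 2) (S k) := fun k =>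
    cutWeight_le_heatWeight hα ht (hS.nonneg k)
  have hdil := hS.truncSq_div_le_sub (m := n + 2) (by omega)
  push_cast at hdil
  rw [show 2 * (n + 2) = 2 * n + 2 + 2 by ring] at hdil
  set X : ℕ → ℕ → ℝ := fun n k => heatWeight α (n + 2) (S k)
  set Y : ℕ → ℕ → ℝ := fun n k => cutWeight (n + 2) (S k)
  rw [logTrace_sub (w := Y) (w' := X) (n := n) (fun _ => cutWeight_nonneg) hY
    (fun k => heatWeight_nonneg (hS.nonneg k)) hX ha]
  refine (norm_logTrace_le (w := X - Y) (n := n) (fun k => sub_nonneg.2 (hYX k)) (hX.sub hY)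
    ha).trans ?_
  calc (log (n + 2))⁻¹ * ((∑' k, (heatWeight α (n + 2) (S k) - cutWeight (n + 2) (S k))) * R)
      ≤ (log (n + 2))⁻¹ * (4 * (truncSqSum S (2 * n + 2 + 2) - truncSqSum S (n + 2)) * R) := by
        gcongr
        · exact inv_nonneg.2 (log_nonneg (by linarith))
        · exact (hS.tsum_heatWeight_sub_cutWeight_le hα ht hX).trans hdil
    _ = _ := by ring

theorem logTrace_heatWeight_cutWeight {ω : (ℕ → ℝ) → ℝ} {a : ℕ → ℂ} {R : ℝ} (hω : ExtLimit ω)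
    (hα : 1 ≤ α) (hS : IsM1infSeq S) (ha : ∀ k, ‖a k‖ ≤ R) :
    (∃ M, ∀ n, ‖logTrace (fun n k => heatWeight α (n + 2) (S k)) a n‖ ≤ M) ∧
    (∃ M, ∀ n, ‖logTrace (fun n k => cutWeight (n + 2) (S k)) a n‖ ≤ M) ∧
    extC ω (logTrace (fun n k => heatWeight α (n + 2) (S k)) a)
      = extC ω (logTrace (fun n k => cutWeight (n + 2) (S k)) a) := by
  have ht : ∀ n : ℕ, (0 : ℝ) < n + 2 := fun n => by positivity
  obtain ⟨K, hK⟩ := hS.exists_tsum_heatWeight_le hα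
  have hY := fun n => hS.summable_cutWeight hα (ht n) (hK n).1
  have hXb : ∀ n, ‖logTrace (fun n k => heatWeight α (n + 2) (S k)) a n‖ ≤ K * R := fun n =>
    norm_logTrace_le_mul (fun k => heatWeight_nonneg (hS.nonneg k)) (hK n).1 ha (hK n).2
  have hYb : ∀ n, ‖logTrace (fun n k => cutWeight (n + 2) (S k)) a n‖ ≤ K * R := fun n =>
    norm_logTrace_le_mul (fun _ => cutWeight_nonneg) (hY n) ha <|
      ((hY n).tsum_le_tsum (fun k => cutWeight_le_heatWeight hα (ht n) (hS.nonneg k))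
        (hK n).1).trans (hK n).2
  obtain ⟨C, hC⟩ := hS.exists_truncSqSum_le_mul_log
  have hlog : ∀ n : ℕ, |truncSqSum S (n + 2)| ≤ C * log (n + 2) := fun n => by
    rw [abs_of_nonneg (truncSqSum_nonneg S _)]
    simpa using hC (n + 2) (by omega)
  have hinc : ∀ n, |truncSqSum S (n + 1 + 2) - truncSqSum S (n + 2)| ≤ ∑' k, S k ^ 2 := fun n => by
    rw [abs_of_nonneg (sub_nonneg.2 (truncSqSum_mono S (by omega)))]
    exact hS.truncSqSum_succ_sub_le (n + 2)
  exact ⟨⟨_, hXb⟩, ⟨_, hYb⟩, hω.extC_eq_of_norm_sub_le ⟨_, hXb⟩ ⟨_, hYb⟩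
    (BddSeq.of_abs_le_mul_log hlog) (BddSeq.of_abs_le_mul_log_two_mul hlog)
    (hω.map_two_mul_div_log hinc hlog).symm (4 * R) fun n =>
      norm_logTrace_heatWeight_sub_cutWeight_le hα hS ha (hK n).1⟩

end IsM1infSeq

theorem heatSeq_eq_logTrace {E : Type} [NormedAddCommGroup E] [InnerProductSpace ℂ E]
    (A V : E →L[ℂ] E) (e : HilbertBasis ℕ ℂ E) (α : ℝ) :
    heatSeq A V e α =
      logTrace (fun n k => heatWeight α (n + 2) (mu V k)) fun k => ⟪A (e k), e k⟫_ℂ := by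
  funext n
  refine congrArg _ (tsum_congr fun k => ?_)
  split_ifs with h
  · simp [heatWeight, h]
  · rfl

theorem stmt7_general (ω : (ℕ → ℝ) → ℝ) (hω : ExtLimit ω) (α : ℝ) (hα : 1 < α)
    (A V : H →L[ℂ] H) (hV : MemM1inf V)
    (e : HilbertBasis ℕ ℂ H) :
    (∃ M : ℝ, ∀ n : ℕ, ‖heatSeq A V e α n‖ ≤ M) ∧
    (∃ M : ℝ, ∀ n : ℕ, ‖cutSeq A V e n‖ ≤ M) ∧
    extC ω (heatSeq A V e α) = extC ω (cutSeq A V e) := by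
  have ha : ∀ k, ‖⟪A (e k), e k⟫_ℂ‖ ≤ ‖A‖ := fun k => by
    simpa [e.orthonormal.1 k] using (norm_inner_le_norm (A (e k)) (e k)).trans
      (mul_le_mul_of_nonneg_right (A.le_opNorm (e k)) (norm_nonneg _))
  rw [heatSeq_eq_logTrace]
  exact (IsM1infSeq.of_memM1inf hV).logTrace_heatWeight_cutWeight hω hα.le ha

/-- For a dilation invariant extended limit `ω`, `α > 1`, a bounded
operator `A` and a positive compact `V ∈ M_{1,∞}` with eigenbasis `(e_k)`, the sequences
`x` and `y` above are bounded and `ω(x) = ω(y)`. -/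
theorem stmt7 (ω : (ℕ → ℝ) → ℝ) (hω : ExtLimit ω) (α : ℝ) (hα : 1 < α)
    (A V : H →L[ℂ] H) (hV : MemM1inf V) (hVpos : V.IsPositive)
    (e : HilbertBasis ℕ ℂ H)
    (hVe : ∀ k : ℕ, V (e k) = ((mu V k : ℝ) : ℂ) • e k) :
    (∃ M : ℝ, ∀ n : ℕ, ‖heatSeq A V e α n‖ ≤ M) ∧
    (∃ M : ℝ, ∀ n : ℕ, ‖cutSeq A V e n‖ ≤ M) ∧
    extC ω (heatSeq A V e α) = extC ω (cutSeq A V e) :=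
  stmt7_general ω hω α hα A V hV e

end
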